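/- Let A_L = ∑_{i∈L} a_i be an additive operator on a subset L of the N-spin system (each a_i Hermitian, supported on spin i, with ‖a_i‖ ≤ 1), and let O be a q-local operator. Then for every real x, Π^A_{> x + 2q} · O · Π^A_{≤ x} = 0, where Π^A denote the spectral projectors of A_L. In particular, a q-local operator maps any eigenvector of A_L with eigenvalue a into the span of eigenvectors with eigenvalues a′ satisfying |a′ − a| ≤ 2q. -/

import Mathlib

noncomputable section

open scoped ComplexConjugate

/-- The Hilbert space of `N` spins, each of local dimension `d`:
the `N`-fold tensor product `⊗ ℂ^d`, realized as the space with orthonormal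
basis indexed by configurations `Fin N → Fin d`. -/
abbrev SpinSpace (N d : ℕ) : Type := EuclideanSpace ℂ (Fin N → Fin d)

/-- Operators on the spin system. -/
abbrev SpinOp (N d : ℕ) : Type := SpinSpace N d →L[ℂ] SpinSpace N d

variable {N d : ℕ}

/-- The standard (computational) basis vector labelled by a configuration. -/
def basisVec (f : Fin N → Fin d) : SpinSpace N d := EuclideanSpace.single f 1

/-- The matrix entry `⟨f| A |g⟩` of an operator in the computational basis. -/
def matEntry (A : SpinOp N d) (f g : Fin N → Fin d) : ℂ :=
  inner ℂ (basisVec f) (A (basisVec g))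

/-- `A` is supported on the subset `X` of spins: under the tensor factorization
`ℋ ≅ ℋ_X ⊗ ℋ_{Xᶜ}` it has the form `o ⊗ I`.  Concretely: matrix entries vanish
unless the two configurations agree outside `X`, and entries depend only on the
restrictions of the configurations to `X`. -/
def SupportedOn (X : Finset (Fin N)) (A : SpinOp N d) : Prop :=
  (∀ f g : Fin N → Fin d, (∃ i, i ∉ X ∧ f i ≠ g i) → matEntry A f g = 0) ∧
  (∀ f g f' g' : Fin N → Fin d,
      (∀ i ∈ X, f i = f' i) → (∀ i ∈ X, g i = g' i) →
      (∀ i, i ∉ X → f i = g i) → (∀ i, i ∉ X → f' i = g' i) →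
      matEntry A f g = matEntry A f' g')

/-- A `q`-local operator: a sum of operators, each supported on at most `q` spins. -/
def IsLocalOp (q : ℕ) (A : SpinOp N d) : Prop :=
  ∃ (n : ℕ) (X : Fin n → Finset (Fin N)) (o : Fin n → SpinOp N d),
    (∀ t, (X t).card ≤ q ∧ SupportedOn (X t) (o t)) ∧ A = ∑ t, o t

/-- A `k`-local Hamiltonian with interaction strength `g`: a sum of Hermitian
terms, each supported on at most `k` spins, such that for every spin the total
norm of the terms acting on it is at most `g`. -/
def IsKLocalHamiltonian (k : ℕ) (g : ℝ) (H : SpinOp N d) : Prop :=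
  ∃ (n : ℕ) (X : Fin n → Finset (Fin N)) (h : Fin n → SpinOp N d),
    (∀ t, (X t).card ≤ k ∧ SupportedOn (X t) (h t) ∧ IsSelfAdjoint (h t)) ∧
    (∀ i : Fin N, ∑ t ∈ Finset.univ.filter (fun t => i ∈ X t), ‖h t‖ ≤ g) ∧
    H = ∑ t, h t

/-- An additive operator `A = ∑_{i ∈ L} a_i`, each `a_i` Hermitian, supported on
the single spin `i`, with `‖a_i‖ ≤ 1`. -/
def IsAdditiveOn (L : Finset (Fin N)) (a : Fin N → SpinOp N d) (A : SpinOp N d) : Prop :=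
  (∀ i ∈ L, SupportedOn {i} (a i) ∧ IsSelfAdjoint (a i) ∧ ‖a i‖ ≤ 1) ∧
  A = ∑ i ∈ L, a i

/-- The span of all eigenvectors of `A` whose (real) eigenvalue satisfies `P`. -/
def eigSpan (A : SpinOp N d) (P : ℝ → Prop) : Submodule ℂ (SpinSpace N d) :=
  ⨆ (a : ℝ) (_ : P a), Module.End.eigenspace (A : SpinSpace N d →ₗ[ℂ] SpinSpace N d) (a : ℂ)

/-- Spectral projector of `A` onto the eigenvalues satisfying `P` (the orthogonal
projection onto the span of the corresponding eigenvectors). -/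
def specProj (A : SpinOp N d) (P : ℝ → Prop) : SpinOp N d :=
  (eigSpan A P).subtypeL.comp ((eigSpan A P).orthogonalProjection)

/-- `m` is a median of `A` in the state `ψ`. -/
def IsMedian (A : SpinOp N d) (ψ : SpinSpace N d) (m : ℝ) : Prop :=
  (1:ℝ)/2 ≤ (inner ℂ ψ ((specProj A (fun a => a ≤ m)) ψ) : ℂ).re ∧
  (1:ℝ)/2 ≤ (inner ℂ ψ ((specProj A (fun a => m ≤ a)) ψ) : ℂ).re

/-- The state `ψ` satisfies the local-reversibility bound with function `f`. -/
def SatisfiesLR (f : ℝ → ℝ) (ψ : SpinSpace N d) : Prop :=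
  ∀ (L : Finset (Fin N)) (Γ : SpinOp N d), SupportedOn L Γ →
    (inner ℂ ψ (Γ ψ) : ℂ) ≠ 0 →
    ∀ q : ℕ, 0 < q →
      ∃ R : SpinOp N d, IsLocalOp q R ∧
        ‖R (Γ ψ) - ψ‖ ≤ ‖Γ‖ / ‖(inner ℂ ψ (Γ ψ) : ℂ)‖ * f ((q : ℝ) / Real.sqrt (L.card))

/-- `H` has ground energy `0` with unique normalized ground state `Ω` and spectral
gap (at least) `δE`: `Ω` is a null state, every null state is proportional to `Ω`,
and on the orthogonal complement of `Ω` the energy is at least `δE`. -/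
def IsGappedGround (H : SpinOp N d) (Ω : SpinSpace N d) (δE : ℝ) : Prop :=
  ‖Ω‖ = 1 ∧ H Ω = 0 ∧
  (∀ φ : SpinSpace N d, H φ = 0 → ∃ c : ℂ, φ = c • Ω) ∧
  (∀ φ : SpinSpace N d, (inner ℂ Ω φ : ℂ) = 0 → δE * ‖φ‖ ^ 2 ≤ (inner ℂ φ (H φ) : ℂ).re)

/-!
Fix a term `o` of `O`, supported on `X` with `|X| ≤ q`, and split `A = B + D` with
`B = ∑_{i ∈ L ∩ X} a_i`. Disjointness of supports makes `D` commute with `B` and with `o`, so the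
iterated commutators satisfy `ad_A^n o = ad_B^n o`, of norm at most `(2‖B‖)^n ‖o‖ ≤ (2q)^n ‖o‖`.
For eigenvectors `A v = t v`, `A w = s w`, self-adjointness gives
`⟨w, ad_A^n o v⟩ = (s - t)^n ⟨w, o v⟩`; if `|s - t| > 2q`, letting `n → ∞` forces `⟨w, o v⟩ = 0`.
-/

theorem nonpos_of_forall_pow_mul_le_pow_mul {r s c K : ℝ} (hs : 0 ≤ s) (hsr : s < r)
    (h : ∀ n : ℕ, r ^ n * c ≤ s ^ n * K) : c ≤ 0 := by
  have hr : 0 < r := hs.trans_lt hsr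
  have hbound (n : ℕ) : c ≤ (s / r) ^ n * K := by
    rw [div_pow, div_mul_eq_mul_div, le_div_iff₀ (pow_pos hr n), mul_comm]
    exact h n
  have hlim : Filter.Tendsto (fun n : ℕ => (s / r) ^ n * K) Filter.atTop (nhds 0) := by
    simpa using (tendsto_pow_atTop_nhds_zero_of_lt_one (div_nonneg hs hr.le)
      ((div_lt_one hr).mpr hsr)).mul_const K
  exact ge_of_tendsto' hlim hbound

section IteratedCommutator

theorem norm_lie_le {R : Type*} [NormedRing R] (x y : R) : ‖⁅x, y⁆‖ ≤ 2 * ‖x‖ * ‖y‖ := by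
  rw [Ring.lie_def]
  calc ‖x * y - y * x‖ ≤ ‖x‖ * ‖y‖ + ‖y‖ * ‖x‖ :=
        (norm_sub_le _ _).trans (add_le_add (norm_mul_le _ _) (norm_mul_le _ _))
    _ = 2 * ‖x‖ * ‖y‖ := by ring

theorem norm_iterate_lie_le {R : Type*} [NormedRing R] (x y : R) (n : ℕ) :
    ‖(⁅x, ·⁆)^[n] y‖ ≤ (2 * ‖x‖) ^ n * ‖y‖ := by
  induction n with
  | zero => simp
  | succ n ih =>
    rw [Function.iterate_succ_apply', pow_succ', mul_assoc]
    exact (norm_lie_le _ _).trans (mul_le_mul_of_nonneg_left ih (by positivity))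

variable {R : Type*} [Ring R] {x y z : R}

theorem Commute.iterate_lie_right (hzx : Commute z x) (hzy : Commute z y) (n : ℕ) :
    Commute z ((⁅x, ·⁆)^[n] y) := by
  induction n with
  | zero => exact hzy
  | succ n ih =>
    rw [Function.iterate_succ_apply', Ring.lie_def]
    exact (hzx.mul_right ih).sub_right (ih.mul_right hzx)

theorem iterate_lie_add_left_of_commute (hzx : Commute z x) (hzy : Commute z y) (n : ℕ) :
    (⁅x + z, ·⁆)^[n] y = (⁅x, ·⁆)^[n] y := by
  induction n with
  | zero => rfl
  | succ n ih =>
    rw [Function.iterate_succ_apply', Function.iterate_succ_apply', ih, Ring.lie_def,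
      Ring.lie_def, add_mul, mul_add, (hzx.iterate_lie_right hzy n).eq]
    abel

end IteratedCommutator

section EigenvalueGap

variable {𝕜 E : Type*} [RCLike 𝕜] [NormedAddCommGroup E] [InnerProductSpace 𝕜 E]
  {A B D Z : E →L[𝕜] E} {v w : E} {t s : ℝ}

theorem inner_iterate_lie_apply_of_eigen (hA : (A : E →ₗ[𝕜] E).IsSymmetric)
    (hv : A v = (t : 𝕜) • v) (hw : A w = (s : 𝕜) • w) (n : ℕ) :
    inner 𝕜 w (((⁅A, ·⁆)^[n] Z) v) = ((s : 𝕜) - t) ^ n * inner 𝕜 w (Z v) := by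
  induction n generalizing Z with
  | zero => simp
  | succ n ih =>
    rw [Function.iterate_succ_apply, ih, Ring.lie_def, sub_apply,
      mul_apply_eq_comp, mul_apply_eq_comp, inner_sub_right,
      ← ContinuousLinearMap.coe_coe A, ← hA, ContinuousLinearMap.coe_coe, hw, hv, map_smul,
      inner_smul_left, inner_smul_right, RCLike.conj_ofReal, pow_succ]
    ring

theorem inner_apply_eq_zero_of_norm_lt_eigenvalue_gap (hA : (A : E →ₗ[𝕜] E).IsSymmetric)
    (hBD : A = B + D) (hDB : Commute D B) (hDZ : Commute D Z) (hv : A v = (t : 𝕜) • v)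
    (hw : A w = (s : 𝕜) • w) (hgap : 2 * ‖B‖ < |s - t|) :
    inner 𝕜 w (Z v) = 0 := by
  refine norm_le_zero_iff.mp (nonpos_of_forall_pow_mul_le_pow_mul (by positivity) hgap
    (K := ‖w‖ * ‖Z‖ * ‖v‖) fun n => ?_)
  calc |s - t| ^ n * ‖inner 𝕜 w (Z v)‖ = ‖inner 𝕜 w (((⁅A, ·⁆)^[n] Z) v)‖ := by
        rw [inner_iterate_lie_apply_of_eigen hA hv hw, norm_mul, norm_pow, ← RCLike.ofReal_sub,
          RCLike.norm_ofReal]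
    _ ≤ ‖w‖ * (‖(⁅B, ·⁆)^[n] Z‖ * ‖v‖) := by
        rw [hBD, iterate_lie_add_left_of_commute hDB hDZ]
        exact (norm_inner_le_norm _ _).trans (by gcongr; exact ContinuousLinearMap.le_opNorm _ _)
    _ ≤ ‖w‖ * ((2 * ‖B‖) ^ n * ‖Z‖ * ‖v‖) := by gcongr; exact norm_iterate_lie_le _ _ _
    _ = (2 * ‖B‖) ^ n * (‖w‖ * ‖Z‖ * ‖v‖) := by ring

end EigenvalueGap

section SpinOperators

theorem matEntry_eq_apply (A : SpinOp N d) (f g : Fin N → Fin d) :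
    matEntry A f g = A (basisVec g) f := by
  simp [matEntry, basisVec, EuclideanSpace.inner_single_left]

theorem basisVec_eq_basisFun (f : Fin N → Fin d) :
    basisVec f = EuclideanSpace.basisFun (Fin N → Fin d) ℂ f := by
  rw [EuclideanSpace.basisFun_apply, basisVec]

theorem ext_matEntry {P Q : SpinOp N d} (h : ∀ f g, matEntry P f g = matEntry Q f g) :
    P = Q := by
  refine ContinuousLinearMap.coe_injective
    ((EuclideanSpace.basisFun (Fin N → Fin d) ℂ).toBasis.ext fun g => ?_)
  ext f
  simpa [matEntry_eq_apply, basisVec_eq_basisFun] using h f g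

theorem matEntry_comp (P Q : SpinOp N d) (f g : Fin N → Fin d) :
    matEntry (P.comp Q) f g = ∑ h, matEntry P f h * matEntry Q h g := by
  rw [matEntry, ContinuousLinearMap.comp_apply,
    ← (EuclideanSpace.basisFun (Fin N → Fin d) ℂ).sum_repr' (Q (basisVec g))]
  simp only [map_sum, map_smul, inner_sum, inner_smul_right, matEntry, basisVec_eq_basisFun,
    mul_comm]

variable {X Y : Finset (Fin N)} {P Q : SpinOp N d} {f g : Fin N → Fin d}

theorem SupportedOn.matEntry_eq_zero (hP : SupportedOn X P) {i : Fin N} (hi : i ∉ X)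
    (hfg : f i ≠ g i) : matEntry P f g = 0 :=
  hP.1 f g ⟨i, hi, hfg⟩

theorem SupportedOn.matEntry_comp_eq_zero (hP : SupportedOn X P) (hQ : SupportedOn Y Q)
    {i : Fin N} (hiX : i ∉ X) (hiY : i ∉ Y) (hfg : f i ≠ g i) :
    matEntry (P.comp Q) f g = 0 := by
  rw [matEntry_comp]
  refine Finset.sum_eq_zero fun h _ => ?_
  by_cases hfh : f i = h i
  · rw [hQ.matEntry_eq_zero hiY (hfh ▸ hfg), mul_zero]
  · rw [hP.matEntry_eq_zero hiX hfh, zero_mul]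

theorem SupportedOn.matEntry_comp_of_disjoint (hP : SupportedOn X P)
    (hQ : SupportedOn Y Q) (hXY : Disjoint X Y) :
    matEntry (P.comp Q) f g =
      matEntry P f (X.piecewise g f) * matEntry Q (X.piecewise g f) g := by
  rw [matEntry_comp]
  refine Finset.sum_eq_single_of_mem _ (Finset.mem_univ _) fun h _ hne => ?_
  obtain ⟨i, hi⟩ := Function.ne_iff.mp hne
  by_cases hiX : i ∈ X
  · rw [Finset.piecewise_eq_of_mem _ _ _ hiX] at hi
    rw [hQ.matEntry_eq_zero (Finset.disjoint_left.mp hXY hiX) hi, mul_zero]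
  · rw [Finset.piecewise_eq_of_notMem _ _ _ hiX] at hi
    rw [hP.matEntry_eq_zero hiX (Ne.symm hi), zero_mul]

theorem SupportedOn.matEntry_piecewise (hP : SupportedOn X P)
    (hXY : Disjoint X Y) (hfg : ∀ i, i ∉ X → i ∉ Y → f i = g i) :
    matEntry P f (X.piecewise g f) = matEntry P (Y.piecewise g f) g := by
  refine hP.2 _ _ _ _ (fun i hi => ?_) (fun i hi => ?_) (fun i hi => ?_) (fun i hi => ?_)
  · rw [Finset.piecewise_eq_of_notMem _ _ _ (Finset.disjoint_left.mp hXY hi)]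
  · rw [Finset.piecewise_eq_of_mem _ _ _ hi]
  · rw [Finset.piecewise_eq_of_notMem _ _ _ hi]
  · by_cases hiY : i ∈ Y
    · rw [Finset.piecewise_eq_of_mem _ _ _ hiY]
    · rw [Finset.piecewise_eq_of_notMem _ _ _ hiY, hfg i hi hiY]

theorem SupportedOn.commute (hP : SupportedOn X P) (hQ : SupportedOn Y Q) (hXY : Disjoint X Y) :
    Commute P Q := by
  refine ext_matEntry fun f g => ?_
  by_cases hfg : ∃ i, i ∉ X ∧ i ∉ Y ∧ f i ≠ g i
  · obtain ⟨i, hiX, hiY, hi⟩ := hfg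
    exact (hP.matEntry_comp_eq_zero hQ hiX hiY hi).trans
      (hQ.matEntry_comp_eq_zero hP hiY hiX hi).symm
  · push Not at hfg
    rw [ContinuousLinearMap.mul_def, ContinuousLinearMap.mul_def,
      hP.matEntry_comp_of_disjoint hQ hXY, hQ.matEntry_comp_of_disjoint hP hXY.symm,
      hP.matEntry_piecewise hXY hfg,
      ← hQ.matEntry_piecewise hXY.symm fun i hiY hiX => hfg i hiX hiY, mul_comm]

end SpinOperators

section AdditiveOperators

variable {L : Finset (Fin N)} {a : Fin N → SpinOp N d} {A : SpinOp N d}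
  {v w : SpinSpace N d} {t s : ℝ}

theorem IsAdditiveOn.isSelfAdjoint (hA : IsAdditiveOn L a A) : IsSelfAdjoint A := by
  rw [hA.2]
  exact isSelfAdjoint_sum (R := SpinOp N d) L fun i hi => (hA.1 i hi).2.1

theorem IsAdditiveOn.inner_apply_eq_zero_of_supportedOn (hA : IsAdditiveOn L a A)
    {X : Finset (Fin N)} {o : SpinOp N d} (ho : SupportedOn X o) (hv : A v = (t : ℂ) • v)
    (hw : A w = (s : ℂ) • w) (hgap : 2 * (X.card : ℝ) < |s - t|) :
    inner ℂ w (o v) = 0 := by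
  have ha := hA.1
  refine inner_apply_eq_zero_of_norm_lt_eigenvalue_gap hA.isSelfAdjoint.isSymmetric
    (B := ∑ i ∈ L ∩ X, a i) (D := ∑ i ∈ L \ X, a i)
    (hA.2.trans (Finset.sum_inter_add_sum_sdiff L X a).symm) ?_ ?_ hv hw (lt_of_le_of_lt ?_ hgap)
  · refine Commute.sum_left _ _ _ fun i hi => Commute.sum_right _ _ _ fun j hj => ?_
    rw [Finset.mem_sdiff] at hi
    rw [Finset.mem_inter] at hj
    exact (ha i hi.1).1.commute (ha j hj.1).1
      (Finset.disjoint_singleton.mpr fun hij => hi.2 (hij ▸ hj.2))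
  · refine Commute.sum_left _ _ _ fun i hi => ?_
    rw [Finset.mem_sdiff] at hi
    exact (ha i hi.1).1.commute ho (Finset.disjoint_singleton_left.mpr hi.2)
  · gcongr
    calc ‖∑ i ∈ L ∩ X, a i‖ ≤ ∑ i ∈ L ∩ X, (1 : ℝ) :=
          norm_sum_le_of_le _ fun i hi => (ha i (Finset.mem_inter.mp hi).1).2.2
      _ = ((L ∩ X).card : ℝ) := by simp
      _ ≤ X.card := by exact_mod_cast Finset.card_le_card Finset.inter_subset_right

theorem IsAdditiveOn.inner_apply_eq_zero_of_isLocalOp (hA : IsAdditiveOn L a A) {q : ℕ}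
    {O : SpinOp N d} (hO : IsLocalOp q O) (hv : A v = (t : ℂ) • v) (hw : A w = (s : ℂ) • w)
    (hgap : 2 * (q : ℝ) < |s - t|) :
    inner ℂ w (O v) = 0 := by
  obtain ⟨n, X, o, ho, rfl⟩ := hO
  rw [sum_apply, inner_sum]
  refine Finset.sum_eq_zero fun k _ => hA.inner_apply_eq_zero_of_supportedOn (ho k).2 hv hw ?_
  exact lt_of_le_of_lt (by gcongr; exact_mod_cast (ho k).1) hgap

end AdditiveOperators

theorem Submodule.starProjection_comp_comp_starProjection_eq_zero {𝕜 E : Type*} [RCLike 𝕜]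
    [NormedAddCommGroup E] [InnerProductSpace 𝕜 E] {U K : Submodule 𝕜 E}
    [U.HasOrthogonalProjection] [K.HasOrthogonalProjection] {O : E →L[𝕜] E}
    (h : K ⟂ U.map (O : E →ₗ[𝕜] E)) :
    K.starProjection ∘L O ∘L U.starProjection = 0 := by
  ext x
  exact K.starProjection_apply_eq_zero_iff.mpr
    (Submodule.isOrtho_iff_le.mp h.symm (Submodule.mem_map_of_mem (U.starProjection_apply_mem x)))

theorem specProj_comp_comp_specProj_eq_zero {A O : SpinOp N d} {P Q : ℝ → Prop}
    (h : ∀ t s : ℝ, P t → Q s → ∀ v w : SpinSpace N d,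
      A v = (t : ℂ) • v → A w = (s : ℂ) • w → inner ℂ w (O v) = 0) :
    (specProj A Q).comp (O.comp (specProj A P)) = 0 := by
  refine Submodule.starProjection_comp_comp_starProjection_eq_zero ?_
  simp only [eigSpan, Submodule.map_iSup, Submodule.isOrtho_iSup_left,
    Submodule.isOrtho_iSup_right]
  intro t ht s hs
  rw [Submodule.isOrtho_iff_inner_eq]
  rintro w hw _ ⟨v, hv, rfl⟩
  exact h t s ht hs v w (Module.End.mem_eigenspace_iff.mp hv)
    (Module.End.mem_eigenspace_iff.mp hw)

theorem qlocal_eigenvalue_shift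
    {N d : ℕ} (L : Finset (Fin N)) (a : Fin N → SpinOp N d) (A : SpinOp N d)
    (hA : IsAdditiveOn L a A) (q : ℕ) (O : SpinOp N d) (hO : IsLocalOp q O)
    (x : ℝ) :
    (specProj A (fun t => x + 2 * q < t)).comp
      (O.comp (specProj A (fun t => t ≤ x))) = 0 :=
  specProj_comp_comp_specProj_eq_zero fun t s ht hs _ _ hv hw =>
    hA.inner_apply_eq_zero_of_isLocalOp hO hv hw ((by linarith : 2 * (q : ℝ) < s - t).trans_le
      (le_abs_self _))
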